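/- Assume (H0) and d₁, d₂, l > 0, let k be a natural number, and assume hypothesis (H2) at mode k: B_k − C_k < 0. Then the quartic equation ω⁴ + (A_k² − 2·B_k − b₁₁²)·ω² + B_k² − C_k² = 0 has exactly one positive real root, namely ω_k⁺ = √((−A_k² + 2·B_k + b₁₁² + √((A_k² − 2·B_k − b₁₁²)² − 4·(B_k² − C_k²)))/2). -/

import Mathlib

open Real

/-- Δ = M² − 4·K·(a·m + c·p)·(a·r₂ + c·d − c·r₀) with M = a·m + c·p + K·(a·r₂ + c·d). -/
noncomputable def Delta (r₀ r₂ K d a p c m : ℝ) : ℝ :=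
  (a*m + c*p + K*(a*r₂ + c*d))^2 - 4*K*(a*m + c*p)*(a*r₂ + c*d - c*r₀)

/-- The positive equilibrium predator density v⋆. -/
noncomputable def vstar (r₀ r₂ K d a p c m : ℝ) : ℝ :=
  (-(a*m + c*p + K*(a*r₂ + c*d)) + Real.sqrt (Delta r₀ r₂ K d a p c m)) / (2*K*(a*m + c*p))

/-- The positive equilibrium prey density u⋆ = (r₂ + m·v⋆)/c. -/
noncomputable def ustar (r₀ r₂ K d a p c m : ℝ) : ℝ := (r₂ + m * vstar r₀ r₂ K d a p c m) / c

/-- Linearization coefficient a₁₂. -/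
noncomputable def a12 (r₀ r₂ K d a p c m : ℝ) : ℝ :=
  -K*r₀*ustar r₀ r₂ K d a p c m / (1 + K*vstar r₀ r₂ K d a p c m)^2 - p*ustar r₀ r₂ K d a p c m

/-- Linearization coefficient a₂₁. -/
noncomputable def a21 (r₀ r₂ K d a p c m : ℝ) : ℝ := c * vstar r₀ r₂ K d a p c m

/-- Linearization coefficient a₂₂. -/
noncomputable def a22 (r₀ r₂ K d a p c m : ℝ) : ℝ := -m * vstar r₀ r₂ K d a p c m

/-- Linearization coefficient b₁₁. -/
noncomputable def b11 (r₀ r₂ K d a p c m : ℝ) : ℝ := -a * ustar r₀ r₂ K d a p c m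

/-- A_k = (d₁ + d₂)·k²/l² − a₂₂. -/
noncomputable def Ak (r₀ r₂ K d a p c m d₁ d₂ l : ℝ) (k : ℕ) : ℝ :=
  (d₁ + d₂)*(k:ℝ)^2/l^2 - a22 r₀ r₂ K d a p c m

/-- B_k = d₁·d₂·k⁴/l⁴ − a₂₂·d₁·k²/l² − a₁₂·a₂₁. -/
noncomputable def Bk (r₀ r₂ K d a p c m d₁ d₂ l : ℝ) (k : ℕ) : ℝ :=
  d₁*d₂*(k:ℝ)^4/l^4 - a22 r₀ r₂ K d a p c m * d₁*(k:ℝ)^2/l^2 - a12 r₀ r₂ K d a p c m * a21 r₀ r₂ K d a p c m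

/-- C_k = −b₁₁·d₂·k²/l² + a₂₂·b₁₁. -/
noncomputable def Ck (r₀ r₂ K d a p c m d₁ d₂ l : ℝ) (k : ℕ) : ℝ :=
  -(b11 r₀ r₂ K d a p c m)*d₂*(k:ℝ)^2/l^2 + a22 r₀ r₂ K d a p c m * b11 r₀ r₂ K d a p c m

/-- ω_k⁺. -/
noncomputable def omegaP (r₀ r₂ K d a p c m d₁ d₂ l : ℝ) (k : ℕ) : ℝ :=
  Real.sqrt ((-(Ak r₀ r₂ K d a p c m d₁ d₂ l k)^2 + 2*Bk r₀ r₂ K d a p c m d₁ d₂ l k + (b11 r₀ r₂ K d a p c m)^2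
    + Real.sqrt (((Ak r₀ r₂ K d a p c m d₁ d₂ l k)^2 - 2*Bk r₀ r₂ K d a p c m d₁ d₂ l k - (b11 r₀ r₂ K d a p c m)^2)^2
      - 4*((Bk r₀ r₂ K d a p c m d₁ d₂ l k)^2 - (Ck r₀ r₂ K d a p c m d₁ d₂ l k)^2))) / 2)

/-- ω_k⁻. -/
noncomputable def omegaM (r₀ r₂ K d a p c m d₁ d₂ l : ℝ) (k : ℕ) : ℝ :=
  Real.sqrt ((-(Ak r₀ r₂ K d a p c m d₁ d₂ l k)^2 + 2*Bk r₀ r₂ K d a p c m d₁ d₂ l k + (b11 r₀ r₂ K d a p c m)^2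
    - Real.sqrt (((Ak r₀ r₂ K d a p c m d₁ d₂ l k)^2 - 2*Bk r₀ r₂ K d a p c m d₁ d₂ l k - (b11 r₀ r₂ K d a p c m)^2)^2
      - 4*((Bk r₀ r₂ K d a p c m d₁ d₂ l k)^2 - (Ck r₀ r₂ K d a p c m d₁ d₂ l k)^2))) / 2)

/-
Positivity of the equilibrium `(u⋆, v⋆)` fixes the signs `a₁₂ < 0 < a₂₁`, `a₂₂ < 0`, `b₁₁ < 0`,
hence `B_k, C_k > 0`, and then (H2) gives `B_k² − C_k² < 0`. As a quadratic in `ω²`, a biquadratic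
`ω⁴ + P ω² + Q` with `Q < 0` has roots of opposite signs, so it has exactly one positive root `ω`.
-/

lemma biquadratic_pos_root_iff {P Q ω : ℝ} (hQ : Q < 0) (hω : 0 < ω) :
    ω ^ 4 + P * ω ^ 2 + Q = 0 ↔ ω = √((-P + √(P ^ 2 - 4 * Q)) / 2) := by
  set s := √(P ^ 2 - 4 * Q)
  have hPs : -s < P ∧ P < s := Real.sq_lt.mp (by linarith)
  have hdisc : discrim 1 P Q = s * s := by
    rw [discrim, Real.mul_self_sqrt (by nlinarith)]
    ring
  rw [show ω ^ 4 + P * ω ^ 2 + Q = 1 * (ω ^ 2 * ω ^ 2) + P * ω ^ 2 + Q by ring,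
    quadratic_eq_zero_iff one_ne_zero hdisc, eq_comm (a := ω),
    Real.sqrt_eq_iff_eq_sq (by linarith) hω.le, mul_one, eq_comm (b := ω ^ 2)]
  have hsmall : (-P - s) / 2 < ω ^ 2 := by nlinarith
  exact ⟨fun h => h.resolve_right hsmall.ne', Or.inl⟩

lemma sqrt_biquadratic_root_pos {P Q : ℝ} (hQ : Q < 0) : 0 < √((-P + √(P ^ 2 - 4 * Q)) / 2) := by
  have : P < √(P ^ 2 - 4 * Q) := Real.lt_sqrt_of_sq_lt (by linarith)
  exact Real.sqrt_pos.mpr (by linarith)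

section Signs

variable {r₀ r₂ K d a p c m : ℝ}

lemma vstar_pos (hK : 0 < K) (ha : 0 < a) (hp : 0 < p) (hc : 0 < c) (hm : 0 < m)
    (hH0 : a*r₂ + c*d - c*r₀ < 0) : 0 < vstar r₀ r₂ K d a p c m := by
  have hKam : 0 < K * (a*m + c*p) := by positivity
  have hM : a*m + c*p + K*(a*r₂ + c*d) < √(Delta r₀ r₂ K d a p c m) := by
    refine Real.lt_sqrt_of_sq_lt ?_
    rw [Delta]
    nlinarith [mul_pos hKam (neg_pos.mpr hH0)]
  exact div_pos (by linarith) (by positivity)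

lemma ustar_pos (hr₂ : 0 < r₂) (hc : 0 < c) (hm : 0 < m) (hv : 0 < vstar r₀ r₂ K d a p c m) :
    0 < ustar r₀ r₂ K d a p c m := by
  unfold ustar
  positivity

lemma a12_neg (hr₀ : 0 < r₀) (hK : 0 < K) (hp : 0 < p) (hu : 0 < ustar r₀ r₂ K d a p c m) :
    a12 r₀ r₂ K d a p c m < 0 := by
  have : 0 ≤ K*r₀*ustar r₀ r₂ K d a p c m / (1 + K*vstar r₀ r₂ K d a p c m)^2 := by positivity
  rw [a12, neg_mul, neg_mul, neg_div]
  nlinarith [mul_pos hp hu]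

lemma a21_pos (hc : 0 < c) (hv : 0 < vstar r₀ r₂ K d a p c m) : 0 < a21 r₀ r₂ K d a p c m :=
  mul_pos hc hv

lemma a22_neg (hm : 0 < m) (hv : 0 < vstar r₀ r₂ K d a p c m) : a22 r₀ r₂ K d a p c m < 0 := by
  rw [a22, neg_mul]
  exact neg_neg_of_pos (mul_pos hm hv)

lemma b11_neg (ha : 0 < a) (hu : 0 < ustar r₀ r₂ K d a p c m) : b11 r₀ r₂ K d a p c m < 0 := by
  rw [b11, neg_mul]
  exact neg_neg_of_pos (mul_pos ha hu)

variable {d₁ d₂ l : ℝ} {k : ℕ}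

lemma Bk_pos (hd₁ : 0 < d₁) (hd₂ : 0 < d₂) (ha12 : a12 r₀ r₂ K d a p c m < 0)
    (ha21 : 0 < a21 r₀ r₂ K d a p c m) (ha22 : a22 r₀ r₂ K d a p c m < 0) :
    0 < Bk r₀ r₂ K d a p c m d₁ d₂ l k := by
  have h₁ : 0 ≤ d₁*d₂*(k:ℝ)^4/l^4 := by positivity
  have h₂ : a22 r₀ r₂ K d a p c m * d₁*(k:ℝ)^2/l^2 ≤ 0 :=
    div_nonpos_of_nonpos_of_nonneg (mul_nonpos_of_nonpos_of_nonneg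
      (mul_nonpos_of_nonpos_of_nonneg ha22.le hd₁.le) (by positivity)) (by positivity)
  have h₃ := mul_neg_of_neg_of_pos ha12 ha21
  rw [Bk]
  linarith

lemma Ck_pos (hd₂ : 0 < d₂) (ha22 : a22 r₀ r₂ K d a p c m < 0) (hb11 : b11 r₀ r₂ K d a p c m < 0) :
    0 < Ck r₀ r₂ K d a p c m d₁ d₂ l k := by
  have h₁ : 0 ≤ -(b11 r₀ r₂ K d a p c m)*d₂*(k:ℝ)^2/l^2 :=
    div_nonneg (mul_nonneg (mul_nonneg (by linarith) hd₂.le) (by positivity)) (by positivity)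
  have h₂ := mul_pos_of_neg_of_neg ha22 hb11
  rw [Ck]
  linarith

end Signs

theorem stmt11_general (r₀ r₂ K d a p c m d₁ d₂ l : ℝ) (hr₀ : 0 < r₀) (hr₂ : 0 < r₂) (hK : 0 < K) (ha : 0 < a) (hp : 0 < p) (hc : 0 < c) (hm : 0 < m)
    (hd₁ : 0 < d₁) (hd₂ : 0 < d₂)
    (hH0 : a*r₂ + c*d - c*r₀ < 0) (k : ℕ) (hH2 : Bk r₀ r₂ K d a p c m d₁ d₂ l k - Ck r₀ r₂ K d a p c m d₁ d₂ l k < 0) :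
    0 < omegaP r₀ r₂ K d a p c m d₁ d₂ l k ∧
    (omegaP r₀ r₂ K d a p c m d₁ d₂ l k)^4 + ((Ak r₀ r₂ K d a p c m d₁ d₂ l k)^2 - 2*Bk r₀ r₂ K d a p c m d₁ d₂ l k - (b11 r₀ r₂ K d a p c m)^2)*(omegaP r₀ r₂ K d a p c m d₁ d₂ l k)^2
      + (Bk r₀ r₂ K d a p c m d₁ d₂ l k)^2 - (Ck r₀ r₂ K d a p c m d₁ d₂ l k)^2 = 0 ∧
    ∀ ω : ℝ, 0 < ω →
      ω^4 + ((Ak r₀ r₂ K d a p c m d₁ d₂ l k)^2 - 2*Bk r₀ r₂ K d a p c m d₁ d₂ l k - (b11 r₀ r₂ K d a p c m)^2)*ω^2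
        + (Bk r₀ r₂ K d a p c m d₁ d₂ l k)^2 - (Ck r₀ r₂ K d a p c m d₁ d₂ l k)^2 = 0 →
      ω = omegaP r₀ r₂ K d a p c m d₁ d₂ l k := by
  have hv := vstar_pos hK ha hp hc hm hH0
  have hu := ustar_pos hr₂ hc hm hv
  have ha22 := a22_neg hm hv
  have hB := Bk_pos (l := l) (k := k) hd₁ hd₂ (a12_neg hr₀ hK hp hu) (a21_pos hc hv) ha22
  have hC := Ck_pos (d₁ := d₁) (l := l) (k := k) hd₂ ha22 (b11_neg ha hu)
  set P := (Ak r₀ r₂ K d a p c m d₁ d₂ l k)^2 - 2*Bk r₀ r₂ K d a p c m d₁ d₂ l k - (b11 r₀ r₂ K d a p c m)^2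
  set B := Bk r₀ r₂ K d a p c m d₁ d₂ l k
  set C := Ck r₀ r₂ K d a p c m d₁ d₂ l k
  have hQ : B^2 - C^2 < 0 := by
    rw [sq_sub_sq]
    exact mul_neg_of_pos_of_neg (add_pos hB hC) hH2
  have hωP : omegaP r₀ r₂ K d a p c m d₁ d₂ l k = √((-P + √(P^2 - 4*(B^2 - C^2))) / 2) := by
    simp only [omegaP, P, B, C]
    congr 1
    ring
  simp only [add_sub_assoc, hωP]
  exact ⟨sqrt_biquadratic_root_pos hQ, (biquadratic_pos_root_iff hQ (sqrt_biquadratic_root_pos hQ)).mpr rfl,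
    fun ω hω => (biquadratic_pos_root_iff hQ hω).mp⟩

theorem stmt11 (r₀ r₂ K d a p c m d₁ d₂ l : ℝ) (hr₀ : 0 < r₀) (hr₂ : 0 < r₂) (hK : 0 < K) (hd : 0 < d) (ha : 0 < a) (hp : 0 < p) (hc : 0 < c) (hm : 0 < m)
    (hd₁ : 0 < d₁) (hd₂ : 0 < d₂) (hl : 0 < l)
    (hH0 : a*r₂ + c*d - c*r₀ < 0) (k : ℕ) (hH2 : Bk r₀ r₂ K d a p c m d₁ d₂ l k - Ck r₀ r₂ K d a p c m d₁ d₂ l k < 0) :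
    0 < omegaP r₀ r₂ K d a p c m d₁ d₂ l k ∧
    (omegaP r₀ r₂ K d a p c m d₁ d₂ l k)^4 + ((Ak r₀ r₂ K d a p c m d₁ d₂ l k)^2 - 2*Bk r₀ r₂ K d a p c m d₁ d₂ l k - (b11 r₀ r₂ K d a p c m)^2)*(omegaP r₀ r₂ K d a p c m d₁ d₂ l k)^2
      + (Bk r₀ r₂ K d a p c m d₁ d₂ l k)^2 - (Ck r₀ r₂ K d a p c m d₁ d₂ l k)^2 = 0 ∧
    ∀ ω : ℝ, 0 < ω →
      ω^4 + ((Ak r₀ r₂ K d a p c m d₁ d₂ l k)^2 - 2*Bk r₀ r₂ K d a p c m d₁ d₂ l k - (b11 r₀ r₂ K d a p c m)^2)*ω^2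
        + (Bk r₀ r₂ K d a p c m d₁ d₂ l k)^2 - (Ck r₀ r₂ K d a p c m d₁ d₂ l k)^2 = 0 →
      ω = omegaP r₀ r₂ K d a p c m d₁ d₂ l k :=
  stmt11_general r₀ r₂ K d a p c m d₁ d₂ l hr₀ hr₂ hK ha hp hc hm hd₁ hd₂ hH0 k hH2
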